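/- arXiv:2303.16448 — 7 statements merged into one kernel-verified Lean document; each statement's English description precedes it below -/
import Mathlib

section
/- Let a < b, let T₁, T₂, R₁, R₂ : ℝ × ℝ → ℝ be continuous on [a,b]², and let v : ℝ → ℝ be continuous on [a,b]. Define (𝒯v)(s) = ∫_a^s T₁(s,θ)v(θ)dθ + ∫_s^b T₂(s,θ)v(θ)dθ and (ℛv)(s) = ∫_a^s R₁(s,θ)v(θ)dθ + ∫_s^b R₂(s,θ)v(θ)dθ. Define B₁(s,θ,η) = T₁(s,θ)R₁(s,η) + T₁(s,η)R₁(s,θ), B₂(s,θ,η) = T₂(s,θ)R₁(s,η) + T₁(s,η)R₂(s,θ), and B₃(s,θ,η) = T₂(s,θ)R₂(s,η) + T₂(s,η)R₂(s,θ). Then for every s ∈ [a,b], (𝒯v)(s)·(ℛv)(s) = ∫_a^s ∫_a^θ B₁(s,θ,η)v(θ)v(η) dη dθ + ∫_s^b ∫_a^s B₂(s,θ,η)v(θ)v(η) dη dθ + ∫_s^b ∫_s^θ B₃(s,θ,η)v(θ)v(η) dη dθ. -/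
/-!
Write each operator as the sum of its Volterra parts over `[a, s]` and `[s, b]` and expand the
product. The two cross terms are integrals over `[a, s]` and `[s, b]` respectively, so by linearity
their sum is a single iterated integral over the rectangle `[s, b] × [a, s]`. Each diagonal term
`(∫_c^d f) (∫_c^d g)` equals `F d * G d` for the primitives `F`, `G` vanishing at `c`, hence is
`∫_c^d (F G)' = ∫_c^d (f G + F g)`, the integral of `f θ g η + f η g θ` over the triangle `η ≤ θ`.
-/

open MeasureTheory Set intervalIntegral

theorem hasDerivAt_integral_of_continuousOn_uIcc {f : ℝ → ℝ} {c d x : ℝ}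
    (hf : ContinuousOn f (uIcc c d)) (hx : x ∈ Ioo (min c d) (max c d)) :
    HasDerivAt (fun u => ∫ t in c..u, f t) (f x) x :=
  integral_hasDerivAt_right
    ((hf.mono (uIcc_subset_uIcc left_mem_uIcc (Ioo_subset_Icc_self hx))).intervalIntegrable)
    (ContinuousOn.stronglyMeasurableAtFilter isOpen_Ioo (hf.mono Ioo_subset_Icc_self) x hx)
    (hf.continuousAt (Icc_mem_nhds hx.1 hx.2))

theorem integral_const_mul_add_mul_const {g h : ℝ → ℝ} {p p' : ℝ}
    (hg : IntervalIntegrable g volume p p') (hh : IntervalIntegrable h volume p p') (x y : ℝ) :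
    ∫ η in p..p', (x * g η + h η * y) = x * (∫ η in p..p', g η) + (∫ η in p..p', h η) * y := by
  rw [integral_add (hg.const_mul x) (hh.mul_const y), intervalIntegral.integral_const_mul,
    intervalIntegral.integral_mul_const]

theorem integral_integral_mul_add_mul_eq {f g h k : ℝ → ℝ} {p p' q q' : ℝ}
    (hf : IntervalIntegrable f volume q q') (hk : IntervalIntegrable k volume q q')
    (hg : IntervalIntegrable g volume p p') (hh : IntervalIntegrable h volume p p') :
    ∫ θ in q..q', ∫ η in p..p', (f θ * g η + h η * k θ)
      = (∫ θ in q..q', f θ) * (∫ η in p..p', g η) + (∫ η in p..p', h η) * ∫ θ in q..q', k θ := by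
  simp_rw [integral_const_mul_add_mul_const hg hh]
  rw [integral_add (hf.mul_const _) (hk.const_mul _), intervalIntegral.integral_mul_const,
    intervalIntegral.integral_const_mul]

theorem integral_integral_triangle_eq_mul {f g : ℝ → ℝ} {c d : ℝ}
    (hf : ContinuousOn f (uIcc c d)) (hg : ContinuousOn g (uIcc c d)) :
    ∫ θ in c..d, ∫ η in c..θ, (f θ * g η + f η * g θ)
      = (∫ θ in c..d, f θ) * ∫ θ in c..d, g θ := by
  set F := fun u => ∫ t in c..u, f t
  set G := fun u => ∫ t in c..u, g t
  have inner : EqOn (fun θ => ∫ η in c..θ, (f θ * g η + f η * g θ))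
      (fun θ => f θ * G θ + F θ * g θ) (uIcc c d) := fun θ hθ =>
    have hsub := uIcc_subset_uIcc left_mem_uIcc hθ
    integral_const_mul_add_mul_const ((hg.mono hsub).intervalIntegrable)
      ((hf.mono hsub).intervalIntegrable) _ _
  have hFG := integral_deriv_mul_eq_sub_of_hasDerivAt
    (continuousOn_primitive_interval hf.integrableOn_uIcc)
    (continuousOn_primitive_interval hg.integrableOn_uIcc)
    (fun x hx => hasDerivAt_integral_of_continuousOn_uIcc hf hx)
    (fun x hx => hasDerivAt_integral_of_continuousOn_uIcc hg hx)
    hf.intervalIntegrable hg.intervalIntegrable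
  simp only [integral_same, mul_zero, sub_zero] at hFG
  rw [integral_congr inner, hFG]

theorem tensor_product_of_2PI_operators_general (a b : ℝ)
    (T₁ T₂ R₁ R₂ : ℝ × ℝ → ℝ)
    (hT₁ : ContinuousOn T₁ (Set.Icc a b ×ˢ Set.Icc a b))
    (hT₂ : ContinuousOn T₂ (Set.Icc a b ×ˢ Set.Icc a b))
    (hR₁ : ContinuousOn R₁ (Set.Icc a b ×ˢ Set.Icc a b))
    (hR₂ : ContinuousOn R₂ (Set.Icc a b ×ˢ Set.Icc a b))
    (v : ℝ → ℝ) (hv : ContinuousOn v (Set.Icc a b))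
    (s : ℝ) (hs : s ∈ Set.Icc a b) :
    ((∫ θ in a..s, T₁ (s, θ) * v θ) + ∫ θ in s..b, T₂ (s, θ) * v θ)
      * ((∫ θ in a..s, R₁ (s, θ) * v θ) + ∫ θ in s..b, R₂ (s, θ) * v θ)
    = (∫ θ in a..s, ∫ η in a..θ,
        (T₁ (s, θ) * R₁ (s, η) + T₁ (s, η) * R₁ (s, θ)) * v θ * v η)
      + (∫ θ in s..b, ∫ η in a..s,
        (T₂ (s, θ) * R₁ (s, η) + T₁ (s, η) * R₂ (s, θ)) * v θ * v η)
      + (∫ θ in s..b, ∫ η in s..θ,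
        (T₂ (s, θ) * R₂ (s, η) + T₂ (s, η) * R₂ (s, θ)) * v θ * v η) := by
  have hleft : uIcc a s ⊆ Icc a b := uIcc_subset_Icc (left_mem_Icc.2 (hs.1.trans hs.2)) hs
  have hright : uIcc s b ⊆ Icc a b := uIcc_subset_Icc hs (right_mem_Icc.2 (hs.1.trans hs.2))
  have hslice {K : ℝ × ℝ → ℝ} (hK : ContinuousOn K (Icc a b ×ˢ Icc a b)) :
      ContinuousOn (fun θ => K (s, θ) * v θ) (Icc a b) :=
    (ContinuousOn.uncurry_left (f := Function.curry K) s hs hK).mul hv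
  have hT₁a := (hslice hT₁).mono hleft
  have hR₁a := (hslice hR₁).mono hleft
  have hT₂b := (hslice hT₂).mono hright
  have hR₂b := (hslice hR₂).mono hright
  have hseparate (K L K' L' : ℝ × ℝ → ℝ) (θ η : ℝ) :
      (K (s, θ) * L (s, η) + K' (s, η) * L' (s, θ)) * v θ * v η
        = K (s, θ) * v θ * (L (s, η) * v η) + K' (s, η) * v η * (L' (s, θ) * v θ) := by
    ring
  simp only [hseparate]
  rw [integral_integral_triangle_eq_mul hT₁a hR₁a, integral_integral_triangle_eq_mul hT₂b hR₂b,
    integral_integral_mul_add_mul_eq hT₂b.intervalIntegrable hR₂b.intervalIntegrable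
      hR₁a.intervalIntegrable hT₁a.intervalIntegrable]
  ring

theorem tensor_product_of_2PI_operators (a b : ℝ) (hab : a < b)
    (T₁ T₂ R₁ R₂ : ℝ × ℝ → ℝ)
    (hT₁ : ContinuousOn T₁ (Set.Icc a b ×ˢ Set.Icc a b))
    (hT₂ : ContinuousOn T₂ (Set.Icc a b ×ˢ Set.Icc a b))
    (hR₁ : ContinuousOn R₁ (Set.Icc a b ×ˢ Set.Icc a b))
    (hR₂ : ContinuousOn R₂ (Set.Icc a b ×ˢ Set.Icc a b))
    (v : ℝ → ℝ) (hv : ContinuousOn v (Set.Icc a b))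
    (s : ℝ) (hs : s ∈ Set.Icc a b) :
    ((∫ θ in a..s, T₁ (s, θ) * v θ) + ∫ θ in s..b, T₂ (s, θ) * v θ)
      * ((∫ θ in a..s, R₁ (s, θ) * v θ) + ∫ θ in s..b, R₂ (s, θ) * v θ)
    = (∫ θ in a..s, ∫ η in a..θ,
        (T₁ (s, θ) * R₁ (s, η) + T₁ (s, η) * R₁ (s, θ)) * v θ * v η)
      + (∫ θ in s..b, ∫ η in a..s,
        (T₂ (s, θ) * R₁ (s, η) + T₁ (s, η) * R₂ (s, θ)) * v θ * v η)
      + (∫ θ in s..b, ∫ η in s..θ,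
        (T₂ (s, θ) * R₂ (s, η) + T₂ (s, η) * R₂ (s, θ)) * v θ * v η) :=
  tensor_product_of_2PI_operators_general a b T₁ T₂ R₁ R₂ hT₁ hT₂ hR₁ hR₂ v hv s hs
end

section
/- Let a < b. Let Q₀ : ℝ → ℝ be continuous on [a,b], Q₁, Q₂ : ℝ² → ℝ be continuous on [a,b]², and B₁, B₂, B₃ : ℝ³ → ℝ be continuous on [a,b]³, and let w : ℝ² → ℝ be continuous on [a,b]². Define (ℬw)(s) = ∫_a^s ∫_a^θ B₁(s,θ,η)w(θ,η) dη dθ + ∫_s^b ∫_a^s B₂(s,θ,η)w(θ,η) dη dθ + ∫_s^b ∫_s^θ B₃(s,θ,η)w(θ,η) dη dθ, and for a continuous f : ℝ → ℝ define (𝒬f)(s) = Q₀(s)f(s) + ∫_a^s Q₁(s,ζ)f(ζ)dζ + ∫_s^b Q₂(s,ζ)f(ζ)dζ. Set R_{ij}(s,ζ,θ,η) = Q_i(s,ζ)B_j(ζ,θ,η) for i ∈ {1,2}, j ∈ {1,2,3}, and define G₁(s,θ,η) = Q₀(s)B₁(s,θ,η) + ∫_a^η R₁₃(s,ζ,θ,η)dζ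 + ∫_η^θ R₁₂(s,ζ,θ,η)dζ + ∫_θ^s R₁₁(s,ζ,θ,η)dζ + ∫_s^b R₂₁(s,ζ,θ,η)dζ; G₂(s,θ,η) = Q₀(s)B₂(s,θ,η) + ∫_a^η R₁₃(s,ζ,θ,η)dζ + ∫_η^s R₁₂(s,ζ,θ,η)dζ + ∫_s^θ R₂₂(s,ζ,θ,η)dζ + ∫_θ^b R₂₁(s,ζ,θ,η)dζ; G₃(s,θ,η) = Q₀(s)B₃(s,θ,η) + ∫_a^s R₁₃(s,ζ,θ,η)dζ + ∫_s^η R₂₃(s,ζ,θ,η)dζ + ∫_η^θ R₂₂(s,ζ,θ,η)dζ + ∫_θ^b R₂₁(s,ζ,θ,η)dζ. Then for every s ∈ [a,b], (𝒬(ℬw))(s) = ∫_a^s ∫_a^θ G₁(s,θ,η)w(θ,η) dη dθ + ∫_s^b ∫_a^s G₂(s,θ,η)w(θ,η) dη dθ + ∫_s^b ∫_s^θ G₃(s,θ,η)w(θ,η) dη dθ. -/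
open MeasureTheory

/-- Tensor-product partial integral operator with kernels `B₁, B₂, B₃` on `[a,b]`,
applied to a two-variable function `w`, evaluated at `s`. -/
noncomputable def tensorPI (a b : ℝ) (B₁ B₂ B₃ : ℝ → ℝ → ℝ → ℝ)
    (w : ℝ → ℝ → ℝ) (s : ℝ) : ℝ :=
  (∫ θ in a..s, ∫ η in a..θ, B₁ s θ η * w θ η)
    + (∫ θ in s..b, ∫ η in a..s, B₂ s θ η * w θ η)
    + (∫ θ in s..b, ∫ η in s..θ, B₃ s θ η * w θ η)

/-!
Expanding `𝒬(ℬw)(s)` gives, besides the `Q₀`-term, six triple integrals of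
`Q_i(s,ζ) B_j(ζ,θ,η) w(θ,η)`, one for each pair `(i, j)`, each over a region of `[a,b]³` cut out
by orderings of `a, s, b, ζ, θ, η`. Fubini's theorem, in the form of the exchange of two iterated
interval integrals over a rectangle or over a triangle, rewrites each of them with `θ` outermost
and `ζ` innermost; after splitting at `s`, the pieces are exactly the contributions of `R_ij` to
`G₁, G₂, G₃`. Both exchanges hold for intervals of either orientation, so for globally continuous
data the identity holds for every `s`. The general case reduces to this one by the Tietze
extension theorem, since for `s ∈ [a,b]` both sides only involve the data on `[a,b]`.
-/

open MeasureTheory intervalIntegral Set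

@[fun_prop]
theorem continuous_parametric_intervalIntegral_of_continuous_bounds {X : Type*}
    [TopologicalSpace X] {f : X → ℝ → ℝ} (hf : Continuous f.uncurry) {u v : X → ℝ}
    (hu : Continuous u) (hv : Continuous v) :
    Continuous fun x => ∫ t in u x..v x, f x t := by
  have h : ∀ x, ∫ t in u x..v x, f x t
      = (∫ t in (0 : ℝ)..v x, f x t) - ∫ t in (0 : ℝ)..u x, f x t :=
    fun x => (integral_interval_sub_left ((hf.uncurry_left x).intervalIntegrable _ _)
      ((hf.uncurry_left x).intervalIntegrable _ _)).symm
  simp only [h]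
  fun_prop

theorem integral_add_of_continuous {f g : ℝ → ℝ} (hf : Continuous f) (hg : Continuous g)
    (a b : ℝ) : ∫ x in a..b, (f x + g x) = (∫ x in a..b, f x) + ∫ x in a..b, g x :=
  integral_add (hf.intervalIntegrable _ _) (hg.intervalIntegrable _ _)

theorem intervalIntegral_intervalIntegral_add_adjacent {f : ℝ → ℝ → ℝ}
    (hf : Continuous f.uncurry) {u v : ℝ → ℝ} (hu : Continuous u) (hv : Continuous v)
    (a b m : ℝ) :
    ∫ x in a..b, ∫ y in u x..v x, f x y
      = (∫ x in a..b, ∫ y in u x..m, f x y) + ∫ x in a..b, ∫ y in m..v x, f x y := by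
  rw [← integral_add_of_continuous (by fun_prop) (by fun_prop)]
  exact integral_congr fun x _ => (integral_add_adjacent_intervals
    (Continuous.intervalIntegrable (by fun_prop) _ _)
    (Continuous.intervalIntegrable (by fun_prop) _ _)).symm

theorem intervalIntegral_intervalIntegral_swap_of_continuous {f : ℝ → ℝ → ℝ}
    (hf : Continuous f.uncurry) (a b c d : ℝ) :
    ∫ x in a..b, ∫ y in c..d, f x y = ∫ y in c..d, ∫ x in a..b, f x y :=
  intervalIntegral_intervalIntegral_swap <|
    (hf.continuousOn.integrableOn_compact (isCompact_uIcc.prod isCompact_uIcc)).mono_set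
      (prod_mono uIoc_subset_uIcc uIoc_subset_uIcc)

theorem intervalIntegral_intervalIntegral_swap_triangle_of_le {f : ℝ → ℝ → ℝ}
    (hf : Continuous f.uncurry) {c d : ℝ} (hcd : c ≤ d) :
    ∫ x in c..d, ∫ y in c..x, f x y = ∫ y in c..d, ∫ x in y..d, f x y := by
  set g : ℝ → ℝ → ℝ := fun x y => if y ≤ x then f x y else 0
  have hg : IntegrableOn g.uncurry (uIoc c d ×ˢ uIoc c d) := by
    have : g.uncurry = {p : ℝ × ℝ | p.2 ≤ p.1}.indicator f.uncurry := by
      ext ⟨x, y⟩; simp [g, indicator_apply]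
    rw [this]
    exact ((hf.continuousOn.integrableOn_compact (isCompact_uIcc.prod isCompact_uIcc)).mono_set
      (prod_mono uIoc_subset_uIcc uIoc_subset_uIcc)).indicator
      (measurableSet_le continuous_snd.measurable continuous_fst.measurable)
  have inner_left :
      EqOn (fun x => ∫ y in c..x, f x y) (fun x => ∫ y in c..d, g x y) (uIcc c d) := by
    intro x hx
    rw [uIcc_of_le hcd] at hx
    have : g x = (Iic x).indicator (f x) := by ext y; simp [g, indicator_apply]
    simp only [this, integral_of_le hx.1, integral_of_le hcd,
      setIntegral_indicator measurableSet_Iic, Ioc_inter_Iic, inf_of_le_right hx.2]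
  have inner_right :
      EqOn (fun y => ∫ x in y..d, f x y) (fun y => ∫ x in c..d, g x y) (uIcc c d) := by
    intro y hy
    rw [uIcc_of_le hcd] at hy
    have : (fun x => g x y) = (Ici y).indicator (fun x => f x y) := by
      ext x; simp [g, indicator_apply]
    simp only [this, integral_of_le hy.2, integral_of_le hcd,
      setIntegral_indicator measurableSet_Ici]
    rcases hy.1.eq_or_lt with rfl | hcy
    · rw [inter_eq_left.2 fun x hx => hx.1.le]
    · have : Ioc c d ∩ Ici y = Icc y d := by
        ext x
        simp only [mem_inter_iff, mem_Ioc, mem_Ici, mem_Icc]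
        constructor
        · rintro ⟨⟨-, hxd⟩, hyx⟩; exact ⟨hyx, hxd⟩
        · rintro ⟨hyx, hxd⟩; exact ⟨⟨hcy.trans_le hyx, hxd⟩, hyx⟩
      rw [this, integral_Icc_eq_integral_Ioc]
  rw [integral_congr inner_left, integral_congr inner_right]
  exact intervalIntegral_intervalIntegral_swap hg

theorem intervalIntegral_intervalIntegral_swap_triangle {f : ℝ → ℝ → ℝ}
    (hf : Continuous f.uncurry) (c d : ℝ) :
    ∫ x in c..d, ∫ y in c..x, f x y = ∫ y in c..d, ∫ x in y..d, f x y := by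
  rcases le_total c d with hcd | hdc
  · exact intervalIntegral_intervalIntegral_swap_triangle_of_le hf hcd
  · have := intervalIntegral_intervalIntegral_swap_triangle_of_le (f := fun y x => f x y)
      (by fun_prop) hdc
    rw [integral_symm d c, integral_symm d c]
    simp_rw [integral_symm _ c, integral_symm d, intervalIntegral.integral_neg, neg_neg]
    exact this.symm

section Reorder

/- In `integral_reorder_lowerⱼ` (resp. `integral_reorder_upperⱼ`) the outer variable `ζ` runs
over `[a,s]` (resp. `[s,b]`), as in the `Q₁`- (resp. `Q₂`-) part of `𝒬`, and the inner integrals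
are those of the `j`-th region of `ℬ`. -/

variable {F : ℝ → ℝ → ℝ → ℝ} (a s b : ℝ)

theorem integral_reorder_lower₁ (hF : Continuous fun p : ℝ × ℝ × ℝ => F p.1 p.2.1 p.2.2) :
    ∫ ζ in a..s, ∫ θ in a..ζ, ∫ η in a..θ, F ζ θ η
      = ∫ θ in a..s, ∫ η in a..θ, ∫ ζ in θ..s, F ζ θ η := by
  rw [intervalIntegral_intervalIntegral_swap_triangle (by fun_prop)]
  exact integral_congr fun θ _ =>
    intervalIntegral_intervalIntegral_swap_of_continuous (by fun_prop) _ _ _ _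

theorem integral_reorder_lower₂ (hF : Continuous fun p : ℝ × ℝ × ℝ => F p.1 p.2.1 p.2.2) :
    ∫ ζ in a..s, ∫ θ in ζ..b, ∫ η in a..ζ, F ζ θ η
      = (∫ θ in a..s, ∫ η in a..θ, ∫ ζ in η..θ, F ζ θ η)
        + ∫ θ in s..b, ∫ η in a..s, ∫ ζ in η..s, F ζ θ η := by
  rw [intervalIntegral_intervalIntegral_add_adjacent (by fun_prop) (by fun_prop) (by fun_prop)
      _ _ s,
    ← intervalIntegral_intervalIntegral_swap_triangle (by fun_prop),
    intervalIntegral_intervalIntegral_swap_of_continuous (by fun_prop)]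
  congr 1 <;> exact integral_congr fun θ _ =>
    intervalIntegral_intervalIntegral_swap_triangle (by fun_prop) _ _

theorem integral_reorder_lower₃ (hF : Continuous fun p : ℝ × ℝ × ℝ => F p.1 p.2.1 p.2.2) :
    ∫ ζ in a..s, ∫ θ in ζ..b, ∫ η in ζ..θ, F ζ θ η
      = (∫ θ in a..s, ∫ η in a..θ, ∫ ζ in a..η, F ζ θ η)
        + (∫ θ in s..b, ∫ η in a..s, ∫ ζ in a..η, F ζ θ η)
        + ∫ θ in s..b, ∫ η in s..θ, ∫ ζ in a..s, F ζ θ η := by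
  rw [intervalIntegral_intervalIntegral_add_adjacent (by fun_prop) (by fun_prop) (by fun_prop)
      _ _ s,
    ← intervalIntegral_intervalIntegral_swap_triangle (by fun_prop),
    intervalIntegral_intervalIntegral_swap_of_continuous (by fun_prop),
    add_assoc, ← integral_add_of_continuous (by fun_prop) (by fun_prop)]
  congr 1 <;> refine integral_congr fun θ _ => ?_
  · exact (intervalIntegral_intervalIntegral_swap_triangle (by fun_prop) _ _).symm
  · rw [intervalIntegral_intervalIntegral_add_adjacent (by fun_prop) (by fun_prop) (by fun_prop)
        _ _ s,
      ← intervalIntegral_intervalIntegral_swap_triangle (by fun_prop),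
      intervalIntegral_intervalIntegral_swap_of_continuous (by fun_prop)]

theorem integral_reorder_upper₁ (hF : Continuous fun p : ℝ × ℝ × ℝ => F p.1 p.2.1 p.2.2) :
    ∫ ζ in s..b, ∫ θ in a..ζ, ∫ η in a..θ, F ζ θ η
      = (∫ θ in a..s, ∫ η in a..θ, ∫ ζ in s..b, F ζ θ η)
        + (∫ θ in s..b, ∫ η in a..s, ∫ ζ in θ..b, F ζ θ η)
        + ∫ θ in s..b, ∫ η in s..θ, ∫ ζ in θ..b, F ζ θ η := by
  rw [intervalIntegral_intervalIntegral_add_adjacent (by fun_prop) (by fun_prop) (by fun_prop)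
      _ _ s,
    intervalIntegral_intervalIntegral_swap_of_continuous (by fun_prop),
    intervalIntegral_intervalIntegral_swap_triangle (by fun_prop), add_assoc]
  congr 1
  · exact integral_congr fun θ _ =>
      intervalIntegral_intervalIntegral_swap_of_continuous (by fun_prop) _ _ _ _
  · rw [← intervalIntegral_intervalIntegral_add_adjacent (by fun_prop) (by fun_prop)
      (by fun_prop)]
    exact integral_congr fun θ _ =>
      intervalIntegral_intervalIntegral_swap_of_continuous (by fun_prop) _ _ _ _

theorem integral_reorder_upper₂ (hF : Continuous fun p : ℝ × ℝ × ℝ => F p.1 p.2.1 p.2.2) :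
    ∫ ζ in s..b, ∫ θ in ζ..b, ∫ η in a..ζ, F ζ θ η
      = (∫ θ in s..b, ∫ η in a..s, ∫ ζ in s..θ, F ζ θ η)
        + ∫ θ in s..b, ∫ η in s..θ, ∫ ζ in η..θ, F ζ θ η := by
  rw [← intervalIntegral_intervalIntegral_swap_triangle (by fun_prop),
    ← integral_add_of_continuous (by fun_prop) (by fun_prop)]
  refine integral_congr fun θ _ => ?_
  rw [intervalIntegral_intervalIntegral_add_adjacent (by fun_prop) (by fun_prop) (by fun_prop)
      _ _ s,
    intervalIntegral_intervalIntegral_swap_of_continuous (by fun_prop),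
    intervalIntegral_intervalIntegral_swap_triangle (by fun_prop)]

theorem integral_reorder_upper₃ (hF : Continuous fun p : ℝ × ℝ × ℝ => F p.1 p.2.1 p.2.2) :
    ∫ ζ in s..b, ∫ θ in ζ..b, ∫ η in ζ..θ, F ζ θ η
      = ∫ θ in s..b, ∫ η in s..θ, ∫ ζ in s..η, F ζ θ η := by
  rw [← intervalIntegral_intervalIntegral_swap_triangle (by fun_prop)]
  exact integral_congr fun θ _ =>
    (intervalIntegral_intervalIntegral_swap_triangle (by fun_prop) _ _).symm

end Reorder

noncomputable def threePI (a b : ℝ) (Q₀ : ℝ → ℝ) (Q₁ Q₂ : ℝ → ℝ → ℝ) (f : ℝ → ℝ) (s : ℝ) :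
    ℝ :=
  Q₀ s * f s + (∫ ζ in a..s, Q₁ s ζ * f ζ) + ∫ ζ in s..b, Q₂ s ζ * f ζ

section Kernels

/- The kernels `G₁, G₂, G₃` of `𝒬 ∘ ℬ`. -/

variable (a b : ℝ) (Q₀ : ℝ → ℝ) (Q₁ Q₂ : ℝ → ℝ → ℝ) (B₁ B₂ B₃ : ℝ → ℝ → ℝ → ℝ)

noncomputable def compKernel₁ (s θ η : ℝ) : ℝ :=
  Q₀ s * B₁ s θ η + (∫ ζ in a..η, Q₁ s ζ * B₃ ζ θ η) + (∫ ζ in η..θ, Q₁ s ζ * B₂ ζ θ η)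
    + (∫ ζ in θ..s, Q₁ s ζ * B₁ ζ θ η) + ∫ ζ in s..b, Q₂ s ζ * B₁ ζ θ η

noncomputable def compKernel₂ (s θ η : ℝ) : ℝ :=
  Q₀ s * B₂ s θ η + (∫ ζ in a..η, Q₁ s ζ * B₃ ζ θ η) + (∫ ζ in η..s, Q₁ s ζ * B₂ ζ θ η)
    + (∫ ζ in s..θ, Q₂ s ζ * B₂ ζ θ η) + ∫ ζ in θ..b, Q₂ s ζ * B₁ ζ θ η

noncomputable def compKernel₃ (s θ η : ℝ) : ℝ :=
  Q₀ s * B₃ s θ η + (∫ ζ in a..s, Q₁ s ζ * B₃ ζ θ η) + (∫ ζ in s..η, Q₂ s ζ * B₃ ζ θ η)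
    + (∫ ζ in η..θ, Q₂ s ζ * B₂ ζ θ η) + ∫ ζ in θ..b, Q₂ s ζ * B₁ ζ θ η

end Kernels

theorem threePI_tensorPI_of_continuous (a b : ℝ) (Q₀ : ℝ → ℝ) {Q₁ Q₂ : ℝ → ℝ → ℝ}
    {B₁ B₂ B₃ : ℝ → ℝ → ℝ → ℝ} {w : ℝ → ℝ → ℝ}
    (hQ₁ : Continuous fun p : ℝ × ℝ => Q₁ p.1 p.2)
    (hQ₂ : Continuous fun p : ℝ × ℝ => Q₂ p.1 p.2)
    (hB₁ : Continuous fun p : ℝ × ℝ × ℝ => B₁ p.1 p.2.1 p.2.2)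
    (hB₂ : Continuous fun p : ℝ × ℝ × ℝ => B₂ p.1 p.2.1 p.2.2)
    (hB₃ : Continuous fun p : ℝ × ℝ × ℝ => B₃ p.1 p.2.1 p.2.2)
    (hw : Continuous fun p : ℝ × ℝ => w p.1 p.2) (s : ℝ) :
    threePI a b Q₀ Q₁ Q₂ (tensorPI a b B₁ B₂ B₃ w) s
      = tensorPI a b (compKernel₁ a b Q₀ Q₁ Q₂ B₁ B₂ B₃) (compKernel₂ a b Q₀ Q₁ Q₂ B₁ B₂ B₃)
          (compKernel₃ a b Q₀ Q₁ Q₂ B₁ B₂ B₃) w s := by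
  -- `simp` calls its discharger at reducible transparency, where `fun_prop` cannot unfold
  -- `Function.uncurry`.
  simp (disch := with_unfolding_all fun_prop) only [threePI, tensorPI, compKernel₁,
    compKernel₂, compKernel₃, mul_add, add_mul, integral_add_of_continuous,
    ← intervalIntegral.integral_const_mul, ← intervalIntegral.integral_mul_const, mul_assoc]
  linear_combination
    integral_reorder_lower₁ a s (F := fun ζ θ η => Q₁ s ζ * (B₁ ζ θ η * w θ η)) (by fun_prop)
    + integral_reorder_lower₂ a s b (F := fun ζ θ η => Q₁ s ζ * (B₂ ζ θ η * w θ η)) (by fun_prop)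
    + integral_reorder_lower₃ a s b (F := fun ζ θ η => Q₁ s ζ * (B₃ ζ θ η * w θ η)) (by fun_prop)
    + integral_reorder_upper₁ a s b (F := fun ζ θ η => Q₂ s ζ * (B₁ ζ θ η * w θ η)) (by fun_prop)
    + integral_reorder_upper₂ a s b (F := fun ζ θ η => Q₂ s ζ * (B₂ ζ θ η * w θ η)) (by fun_prop)
    + integral_reorder_upper₃ s b (F := fun ζ θ η => Q₂ s ζ * (B₃ ζ θ η * w θ η)) (by fun_prop)

theorem ContinuousOn.exists_continuous_eqOn {X : Type*} [TopologicalSpace X] [NormalSpace X]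
    {f : X → ℝ} {s : Set X} (hf : ContinuousOn f s) (hs : IsClosed s) :
    ∃ g : X → ℝ, Continuous g ∧ EqOn f g s := by
  obtain ⟨g, hg⟩ := ContinuousMap.exists_restrict_eq hs ⟨s.domRestrict f, hf.domRestrict⟩
  exact ⟨g, g.continuous, fun x hx => (congrFun (congrArg DFunLike.coe hg) ⟨x, hx⟩).symm⟩

theorem exists_continuous_eqOn_of_continuousOn₂ {f : ℝ → ℝ → ℝ} {s : Set (ℝ × ℝ)}
    (hf : ContinuousOn (fun p : ℝ × ℝ => f p.1 p.2) s) (hs : IsClosed s) :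
    ∃ g : ℝ → ℝ → ℝ, Continuous (fun p : ℝ × ℝ => g p.1 p.2)
      ∧ EqOn (fun p : ℝ × ℝ => f p.1 p.2) (fun p => g p.1 p.2) s :=
  let ⟨g, hg, hfg⟩ := hf.exists_continuous_eqOn hs
  ⟨fun x y => g (x, y), hg, hfg⟩

theorem exists_continuous_eqOn_of_continuousOn₃ {f : ℝ → ℝ → ℝ → ℝ} {s : Set (ℝ × ℝ × ℝ)}
    (hf : ContinuousOn (fun p : ℝ × ℝ × ℝ => f p.1 p.2.1 p.2.2) s) (hs : IsClosed s) :
    ∃ g : ℝ → ℝ → ℝ → ℝ, Continuous (fun p : ℝ × ℝ × ℝ => g p.1 p.2.1 p.2.2)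
      ∧ EqOn (fun p : ℝ × ℝ × ℝ => f p.1 p.2.1 p.2.2) (fun p => g p.1 p.2.1 p.2.2) s :=
  let ⟨g, hg, hfg⟩ := hf.exists_continuous_eqOn hs
  ⟨fun x y z => g (x, y, z), hg, hfg⟩

section Congr

variable {a b s θ η c d : ℝ}

theorem integral_congr_of_mem_Icc {f g : ℝ → ℝ} (h : EqOn f g (Icc a b)) (hc : c ∈ Icc a b)
    (hd : d ∈ Icc a b) : ∫ x in c..d, f x = ∫ x in c..d, g x :=
  integral_congr (h.mono (uIcc_subset_Icc hc hd))

theorem integral_mul_kernel_congr {Q Q' : ℝ → ℝ → ℝ} {B B' : ℝ → ℝ → ℝ → ℝ}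
    (hQ : EqOn (fun p : ℝ × ℝ => Q p.1 p.2) (fun p => Q' p.1 p.2) (Icc a b ×ˢ Icc a b))
    (hB : EqOn (fun p : ℝ × ℝ × ℝ => B p.1 p.2.1 p.2.2) (fun p => B' p.1 p.2.1 p.2.2)
      (Icc a b ×ˢ Icc a b ×ˢ Icc a b))
    (hs : s ∈ Icc a b) (hθ : θ ∈ Icc a b) (hη : η ∈ Icc a b) (hc : c ∈ Icc a b)
    (hd : d ∈ Icc a b) :
    ∫ ζ in c..d, Q s ζ * B ζ θ η = ∫ ζ in c..d, Q' s ζ * B' ζ θ η :=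
  integral_congr_of_mem_Icc
    (fun ζ hζ => congr_arg₂ (· * ·) (@hQ (s, ζ) ⟨hs, hζ⟩) (@hB (ζ, θ, η) ⟨hζ, hθ, hη⟩)) hc hd

theorem tensorPI_congr {B₁ B₂ B₃ B₁' B₂' B₃' : ℝ → ℝ → ℝ → ℝ} {w w' : ℝ → ℝ → ℝ}
    (hB₁ : EqOn (fun p : ℝ × ℝ × ℝ => B₁ p.1 p.2.1 p.2.2) (fun p => B₁' p.1 p.2.1 p.2.2)
      (Icc a b ×ˢ Icc a b ×ˢ Icc a b))
    (hB₂ : EqOn (fun p : ℝ × ℝ × ℝ => B₂ p.1 p.2.1 p.2.2) (fun p => B₂' p.1 p.2.1 p.2.2)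
      (Icc a b ×ˢ Icc a b ×ˢ Icc a b))
    (hB₃ : EqOn (fun p : ℝ × ℝ × ℝ => B₃ p.1 p.2.1 p.2.2) (fun p => B₃' p.1 p.2.1 p.2.2)
      (Icc a b ×ˢ Icc a b ×ˢ Icc a b))
    (hw : EqOn (fun p : ℝ × ℝ => w p.1 p.2) (fun p => w' p.1 p.2) (Icc a b ×ˢ Icc a b)) :
    EqOn (tensorPI a b B₁ B₂ B₃ w) (tensorPI a b B₁' B₂' B₃' w') (Icc a b) := by
  intro s hs
  have ha : a ∈ Icc a b := left_mem_Icc.2 (hs.1.trans hs.2)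
  have hb : b ∈ Icc a b := right_mem_Icc.2 (hs.1.trans hs.2)
  have hBw : ∀ {B B' : ℝ → ℝ → ℝ → ℝ},
      EqOn (fun p : ℝ × ℝ × ℝ => B p.1 p.2.1 p.2.2) (fun p => B' p.1 p.2.1 p.2.2)
        (Icc a b ×ˢ Icc a b ×ˢ Icc a b) → ∀ {θ}, θ ∈ Icc a b →
      EqOn (fun η => B s θ η * w θ η) (fun η => B' s θ η * w' θ η) (Icc a b) :=
    fun hB θ hθ η hη => congr_arg₂ (· * ·) (@hB (s, θ, η) ⟨hs, hθ, hη⟩) (@hw (θ, η) ⟨hθ, hη⟩)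
  unfold tensorPI
  rw [integral_congr_of_mem_Icc (fun θ hθ => integral_congr_of_mem_Icc (hBw hB₁ hθ) ha hθ) ha hs,
    integral_congr_of_mem_Icc (fun θ hθ => integral_congr_of_mem_Icc (hBw hB₂ hθ) ha hs) hs hb,
    integral_congr_of_mem_Icc (fun θ hθ => integral_congr_of_mem_Icc (hBw hB₃ hθ) hs hθ) hs hb]

theorem threePI_congr {Q₀ : ℝ → ℝ} {Q₁ Q₂ Q₁' Q₂' : ℝ → ℝ → ℝ} {f f' : ℝ → ℝ}
    (hQ₁ : EqOn (fun p : ℝ × ℝ => Q₁ p.1 p.2) (fun p => Q₁' p.1 p.2) (Icc a b ×ˢ Icc a b))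
    (hQ₂ : EqOn (fun p : ℝ × ℝ => Q₂ p.1 p.2) (fun p => Q₂' p.1 p.2) (Icc a b ×ˢ Icc a b))
    (hf : EqOn f f' (Icc a b)) :
    EqOn (threePI a b Q₀ Q₁ Q₂ f) (threePI a b Q₀ Q₁' Q₂' f') (Icc a b) := by
  intro s hs
  have ha : a ∈ Icc a b := left_mem_Icc.2 (hs.1.trans hs.2)
  have hb : b ∈ Icc a b := right_mem_Icc.2 (hs.1.trans hs.2)
  have hQf : ∀ {Q Q' : ℝ → ℝ → ℝ},
      EqOn (fun p : ℝ × ℝ => Q p.1 p.2) (fun p => Q' p.1 p.2) (Icc a b ×ˢ Icc a b) →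
      EqOn (fun ζ => Q s ζ * f ζ) (fun ζ => Q' s ζ * f' ζ) (Icc a b) :=
    fun hQ ζ hζ => congr_arg₂ (· * ·) (@hQ (s, ζ) ⟨hs, hζ⟩) (hf hζ)
  unfold threePI
  rw [hf hs, integral_congr_of_mem_Icc (hQf hQ₁) ha hs, integral_congr_of_mem_Icc (hQf hQ₂) hs hb]

theorem compKernel_congr {Q₀ : ℝ → ℝ} {Q₁ Q₂ Q₁' Q₂' : ℝ → ℝ → ℝ}
    {B₁ B₂ B₃ B₁' B₂' B₃' : ℝ → ℝ → ℝ → ℝ}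
    (hQ₁ : EqOn (fun p : ℝ × ℝ => Q₁ p.1 p.2) (fun p => Q₁' p.1 p.2) (Icc a b ×ˢ Icc a b))
    (hQ₂ : EqOn (fun p : ℝ × ℝ => Q₂ p.1 p.2) (fun p => Q₂' p.1 p.2) (Icc a b ×ˢ Icc a b))
    (hB₁ : EqOn (fun p : ℝ × ℝ × ℝ => B₁ p.1 p.2.1 p.2.2) (fun p => B₁' p.1 p.2.1 p.2.2)
      (Icc a b ×ˢ Icc a b ×ˢ Icc a b))
    (hB₂ : EqOn (fun p : ℝ × ℝ × ℝ => B₂ p.1 p.2.1 p.2.2) (fun p => B₂' p.1 p.2.1 p.2.2)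
      (Icc a b ×ˢ Icc a b ×ˢ Icc a b))
    (hB₃ : EqOn (fun p : ℝ × ℝ × ℝ => B₃ p.1 p.2.1 p.2.2) (fun p => B₃' p.1 p.2.1 p.2.2)
      (Icc a b ×ˢ Icc a b ×ˢ Icc a b))
    (hs : s ∈ Icc a b) (hθ : θ ∈ Icc a b) (hη : η ∈ Icc a b) :
    compKernel₁ a b Q₀ Q₁ Q₂ B₁ B₂ B₃ s θ η = compKernel₁ a b Q₀ Q₁' Q₂' B₁' B₂' B₃' s θ η
      ∧ compKernel₂ a b Q₀ Q₁ Q₂ B₁ B₂ B₃ s θ η = compKernel₂ a b Q₀ Q₁' Q₂' B₁' B₂' B₃' s θ η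
      ∧ compKernel₃ a b Q₀ Q₁ Q₂ B₁ B₂ B₃ s θ η = compKernel₃ a b Q₀ Q₁' Q₂' B₁' B₂' B₃' s θ η := by
  have ha : a ∈ Icc a b := left_mem_Icc.2 (hs.1.trans hs.2)
  have hb : b ∈ Icc a b := right_mem_Icc.2 (hs.1.trans hs.2)
  have hB : ∀ {B B' : ℝ → ℝ → ℝ → ℝ},
      EqOn (fun p : ℝ × ℝ × ℝ => B p.1 p.2.1 p.2.2) (fun p => B' p.1 p.2.1 p.2.2)
        (Icc a b ×ˢ Icc a b ×ˢ Icc a b) → B s θ η = B' s θ η :=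
    fun hB => @hB (s, θ, η) ⟨hs, hθ, hη⟩
  unfold compKernel₁ compKernel₂ compKernel₃
  refine ⟨?_, ?_, ?_⟩
  · rw [hB hB₁, integral_mul_kernel_congr hQ₁ hB₃ hs hθ hη ha hη,
      integral_mul_kernel_congr hQ₁ hB₂ hs hθ hη hη hθ,
      integral_mul_kernel_congr hQ₁ hB₁ hs hθ hη hθ hs,
      integral_mul_kernel_congr hQ₂ hB₁ hs hθ hη hs hb]
  · rw [hB hB₂, integral_mul_kernel_congr hQ₁ hB₃ hs hθ hη ha hη,
      integral_mul_kernel_congr hQ₁ hB₂ hs hθ hη hη hs,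
      integral_mul_kernel_congr hQ₂ hB₂ hs hθ hη hs hθ,
      integral_mul_kernel_congr hQ₂ hB₁ hs hθ hη hθ hb]
  · rw [hB hB₃, integral_mul_kernel_congr hQ₁ hB₃ hs hθ hη ha hs,
      integral_mul_kernel_congr hQ₂ hB₃ hs hθ hη hs hη,
      integral_mul_kernel_congr hQ₂ hB₂ hs hθ hη hη hθ,
      integral_mul_kernel_congr hQ₂ hB₁ hs hθ hη hθ hb]

end Congr

theorem comp_3PI_tensorPI_general (a b : ℝ)
    (Q₀ : ℝ → ℝ) (Q₁ Q₂ : ℝ → ℝ → ℝ) (B₁ B₂ B₃ : ℝ → ℝ → ℝ → ℝ)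
    (w : ℝ → ℝ → ℝ)
    (hQ₁ : ContinuousOn (fun p : ℝ × ℝ => Q₁ p.1 p.2) (Set.Icc a b ×ˢ Set.Icc a b))
    (hQ₂ : ContinuousOn (fun p : ℝ × ℝ => Q₂ p.1 p.2) (Set.Icc a b ×ˢ Set.Icc a b))
    (hB₁ : ContinuousOn (fun p : ℝ × ℝ × ℝ => B₁ p.1 p.2.1 p.2.2)
      (Set.Icc a b ×ˢ Set.Icc a b ×ˢ Set.Icc a b))
    (hB₂ : ContinuousOn (fun p : ℝ × ℝ × ℝ => B₂ p.1 p.2.1 p.2.2)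
      (Set.Icc a b ×ˢ Set.Icc a b ×ˢ Set.Icc a b))
    (hB₃ : ContinuousOn (fun p : ℝ × ℝ × ℝ => B₃ p.1 p.2.1 p.2.2)
      (Set.Icc a b ×ˢ Set.Icc a b ×ˢ Set.Icc a b))
    (hw : ContinuousOn (fun p : ℝ × ℝ => w p.1 p.2) (Set.Icc a b ×ˢ Set.Icc a b))
    (s : ℝ) (hs : s ∈ Set.Icc a b) :
    Q₀ s * tensorPI a b B₁ B₂ B₃ w s
      + (∫ ζ in a..s, Q₁ s ζ * tensorPI a b B₁ B₂ B₃ w ζ)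
      + (∫ ζ in s..b, Q₂ s ζ * tensorPI a b B₁ B₂ B₃ w ζ)
    = tensorPI a b
        (fun s θ η => Q₀ s * B₁ s θ η
          + (∫ ζ in a..η, Q₁ s ζ * B₃ ζ θ η)
          + (∫ ζ in η..θ, Q₁ s ζ * B₂ ζ θ η)
          + (∫ ζ in θ..s, Q₁ s ζ * B₁ ζ θ η)
          + ∫ ζ in s..b, Q₂ s ζ * B₁ ζ θ η)
        (fun s θ η => Q₀ s * B₂ s θ η
          + (∫ ζ in a..η, Q₁ s ζ * B₃ ζ θ η)
          + (∫ ζ in η..s, Q₁ s ζ * B₂ ζ θ η)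
          + (∫ ζ in s..θ, Q₂ s ζ * B₂ ζ θ η)
          + ∫ ζ in θ..b, Q₂ s ζ * B₁ ζ θ η)
        (fun s θ η => Q₀ s * B₃ s θ η
          + (∫ ζ in a..s, Q₁ s ζ * B₃ ζ θ η)
          + (∫ ζ in s..η, Q₂ s ζ * B₃ ζ θ η)
          + (∫ ζ in η..θ, Q₂ s ζ * B₂ ζ θ η)
          + ∫ ζ in θ..b, Q₂ s ζ * B₁ ζ θ η)
        w s := by
  have square : IsClosed (Icc a b ×ˢ Icc a b) := isClosed_Icc.prod isClosed_Icc
  have cube : IsClosed (Icc a b ×ˢ Icc a b ×ˢ Icc a b) := isClosed_Icc.prod square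
  obtain ⟨q₁, hq₁, eq₁⟩ := exists_continuous_eqOn_of_continuousOn₂ hQ₁ square
  obtain ⟨q₂, hq₂, eq₂⟩ := exists_continuous_eqOn_of_continuousOn₂ hQ₂ square
  obtain ⟨k₁, hk₁, ek₁⟩ := exists_continuous_eqOn_of_continuousOn₃ hB₁ cube
  obtain ⟨k₂, hk₂, ek₂⟩ := exists_continuous_eqOn_of_continuousOn₃ hB₂ cube
  obtain ⟨k₃, hk₃, ek₃⟩ := exists_continuous_eqOn_of_continuousOn₃ hB₃ cube
  obtain ⟨v, hv, ev⟩ := exists_continuous_eqOn_of_continuousOn₂ hw square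
  have hG := fun p (hp : p ∈ Icc a b ×ˢ Icc a b ×ˢ Icc a b) =>
    compKernel_congr (Q₀ := Q₀) eq₁ eq₂ ek₁ ek₂ ek₃ hp.1 hp.2.1 hp.2.2
  exact (threePI_congr eq₁ eq₂ (tensorPI_congr ek₁ ek₂ ek₃ ev) hs).trans
    ((threePI_tensorPI_of_continuous a b Q₀ hq₁ hq₂ hk₁ hk₂ hk₃ hv s).trans
      (tensorPI_congr (fun p hp => (hG p hp).1) (fun p hp => (hG p hp).2.1)
        (fun p hp => (hG p hp).2.2) ev hs).symm)

theorem comp_3PI_tensorPI (a b : ℝ) (hab : a < b)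
    (Q₀ : ℝ → ℝ) (Q₁ Q₂ : ℝ → ℝ → ℝ) (B₁ B₂ B₃ : ℝ → ℝ → ℝ → ℝ)
    (w : ℝ → ℝ → ℝ)
    (hQ₀ : ContinuousOn Q₀ (Set.Icc a b))
    (hQ₁ : ContinuousOn (fun p : ℝ × ℝ => Q₁ p.1 p.2) (Set.Icc a b ×ˢ Set.Icc a b))
    (hQ₂ : ContinuousOn (fun p : ℝ × ℝ => Q₂ p.1 p.2) (Set.Icc a b ×ˢ Set.Icc a b))
    (hB₁ : ContinuousOn (fun p : ℝ × ℝ × ℝ => B₁ p.1 p.2.1 p.2.2)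
      (Set.Icc a b ×ˢ Set.Icc a b ×ˢ Set.Icc a b))
    (hB₂ : ContinuousOn (fun p : ℝ × ℝ × ℝ => B₂ p.1 p.2.1 p.2.2)
      (Set.Icc a b ×ˢ Set.Icc a b ×ˢ Set.Icc a b))
    (hB₃ : ContinuousOn (fun p : ℝ × ℝ × ℝ => B₃ p.1 p.2.1 p.2.2)
      (Set.Icc a b ×ˢ Set.Icc a b ×ˢ Set.Icc a b))
    (hw : ContinuousOn (fun p : ℝ × ℝ => w p.1 p.2) (Set.Icc a b ×ˢ Set.Icc a b))
    (s : ℝ) (hs : s ∈ Set.Icc a b) :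
    Q₀ s * tensorPI a b B₁ B₂ B₃ w s
      + (∫ ζ in a..s, Q₁ s ζ * tensorPI a b B₁ B₂ B₃ w ζ)
      + (∫ ζ in s..b, Q₂ s ζ * tensorPI a b B₁ B₂ B₃ w ζ)
    = tensorPI a b
        (fun s θ η => Q₀ s * B₁ s θ η
          + (∫ ζ in a..η, Q₁ s ζ * B₃ ζ θ η)
          + (∫ ζ in η..θ, Q₁ s ζ * B₂ ζ θ η)
          + (∫ ζ in θ..s, Q₁ s ζ * B₁ ζ θ η)
          + ∫ ζ in s..b, Q₂ s ζ * B₁ ζ θ η)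
        (fun s θ η => Q₀ s * B₂ s θ η
          + (∫ ζ in a..η, Q₁ s ζ * B₃ ζ θ η)
          + (∫ ζ in η..s, Q₁ s ζ * B₂ ζ θ η)
          + (∫ ζ in s..θ, Q₂ s ζ * B₂ ζ θ η)
          + ∫ ζ in θ..b, Q₂ s ζ * B₁ ζ θ η)
        (fun s θ η => Q₀ s * B₃ s θ η
          + (∫ ζ in a..s, Q₁ s ζ * B₃ ζ θ η)
          + (∫ ζ in s..η, Q₂ s ζ * B₃ ζ θ η)
          + (∫ ζ in η..θ, Q₂ s ζ * B₂ ζ θ η)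
          + ∫ ζ in θ..b, Q₂ s ζ * B₁ ζ θ η)
        w s :=
  comp_3PI_tensorPI_general a b Q₀ Q₁ Q₂ B₁ B₂ B₃ w hQ₁ hQ₂ hB₁ hB₂ hB₃ hw s hs
end

section
/- Let u : ℝ → ℝ be twice continuously differentiable on [0,1] with u(0) = 0 and u(1) = 0. Then for every s ∈ [0,1], ∫_0^s (s−1)·θ·u''(θ) dθ + ∫_s^1 s·(θ−1)·u''(θ) dθ = u(s). -/
open MeasureTheory Set intervalIntegral

/-!
Up to the factors `s - 1` and `s`, the two integrals are `∫ (θ - c) * u'' θ` with `c = 0` and `c = 1`,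
and `(θ - c) * u'' θ` is the derivative of `(θ - c) * u' θ - u θ`. Evaluating these primitives at
the endpoints, the `u'(s)` terms cancel and the boundary values `u 0 = u 1 = 0` leave exactly `u s`.
-/

theorem integral_eq_sub_of_hasDerivWithinAt_Icc {E : Type*} [NormedAddCommGroup E]
    [NormedSpace ℝ E] [CompleteSpace E] {f f' : ℝ → E} {a b : ℝ} (hab : a ≤ b)
    (hf : ∀ x ∈ Icc a b, HasDerivWithinAt f (f' x) (Icc a b) x)
    (hint : IntervalIntegrable f' volume a b) :
    ∫ x in a..b, f' x = f b - f a :=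
  integral_eq_sub_of_hasDerivAt_of_le hab (fun x hx => (hf x hx).continuousWithinAt)
    (fun x hx => (hf x (Ioo_subset_Icc_self hx)).hasDerivAt (Icc_mem_nhds hx.1 hx.2)) hint

theorem integral_sub_mul_eq_of_hasDerivWithinAt_Icc {u u' u'' : ℝ → ℝ} {a b : ℝ} (c : ℝ)
    (hab : a ≤ b)
    (hu' : ∀ x ∈ Icc a b, HasDerivWithinAt u (u' x) (Icc a b) x)
    (hu'' : ∀ x ∈ Icc a b, HasDerivWithinAt u' (u'' x) (Icc a b) x)
    (hcont : ContinuousOn u'' (Icc a b)) :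
    ∫ x in a..b, (x - c) * u'' x = ((b - c) * u' b - u b) - ((a - c) * u' a - u a) := by
  have hprimitive : ∀ x ∈ Icc a b, HasDerivWithinAt (fun x => (x - c) * u' x - u x)
      ((x - c) * u'' x) (Icc a b) x := fun x hx =>
    ((((hasDerivWithinAt_id x _).sub_const c).mul (hu'' x hx)).sub (hu' x hx)).congr_deriv
      (by simp only [id]; ring)
  have hint : IntervalIntegrable (fun x => (x - c) * u'' x) volume a b :=
    ((continuousOn_id.sub continuousOn_const).mul hcont).intervalIntegrable_of_Icc hab
  exact integral_eq_sub_of_hasDerivWithinAt_Icc hab hprimitive hint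

theorem Top_reconstructs_state (u u' u'' : ℝ → ℝ)
    (hu' : ∀ x ∈ Set.Icc (0:ℝ) 1, HasDerivWithinAt u (u' x) (Set.Icc 0 1) x)
    (hu'' : ∀ x ∈ Set.Icc (0:ℝ) 1, HasDerivWithinAt u' (u'' x) (Set.Icc 0 1) x)
    (hcont : ContinuousOn u'' (Set.Icc 0 1))
    (h0 : u 0 = 0) (h1 : u 1 = 0) :
    ∀ s ∈ Set.Icc (0:ℝ) 1,
      (∫ θ in (0:ℝ)..s, (s - 1) * θ * u'' θ)
        + (∫ θ in s..(1:ℝ), s * (θ - 1) * u'' θ) = u s := by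
  intro s hs
  have hleft : Icc 0 s ⊆ Icc (0:ℝ) 1 := Icc_subset_Icc le_rfl hs.2
  have hright : Icc s 1 ⊆ Icc (0:ℝ) 1 := Icc_subset_Icc hs.1 le_rfl
  have h_left := integral_sub_mul_eq_of_hasDerivWithinAt_Icc 0 hs.1
    (fun x hx => (hu' x (hleft hx)).mono hleft) (fun x hx => (hu'' x (hleft hx)).mono hleft)
    (hcont.mono hleft)
  have h_right := integral_sub_mul_eq_of_hasDerivWithinAt_Icc 1 hs.2
    (fun x hx => (hu' x (hright hx)).mono hright) (fun x hx => (hu'' x (hright hx)).mono hright)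
    (hcont.mono hright)
  calc (∫ θ in (0:ℝ)..s, (s - 1) * θ * u'' θ) + (∫ θ in s..(1:ℝ), s * (θ - 1) * u'' θ)
      = (s - 1) * (∫ θ in (0:ℝ)..s, (θ - 0) * u'' θ)
          + s * ∫ θ in s..(1:ℝ), (θ - 1) * u'' θ := by
        simp only [← intervalIntegral.integral_const_mul, sub_zero, mul_assoc]
    _ = u s := by
        rw [h_left, h_right, h0, h1]
        ring
end

section
/- Let v, w : ℝ → ℝ be continuous on [0,1]. Define (𝒯v)(s) = ∫_0^s (s−1)θ·v(θ)dθ + ∫_s^1 s(θ−1)·v(θ)dθ and (ℛv)(s) = ∫_0^s θ·v(θ)dθ + ∫_s^1 (θ−1)·v(θ)dθ, and similarly for w. Then ∫_0^1 w(s)·(𝒯v)(s) ds = −∫_0^1 (ℛw)(s)·(ℛv)(s) ds. In particular, ∫_0^1 v(s)·(𝒯v)(s) ds = −∫_0^1 ((ℛv)(s))² ds ≤ 0. -/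
/-!
Both operators are assembled from the primitives `∫₀ˢ θ v` and `∫₁ˢ (θ - 1) v`, which gives
`(ℛv)' = v`, `(𝒯v)' = ℛv` and `𝒯v 0 = 𝒯v 1 = 0`. Integrating `w · 𝒯v = (ℛw)' · 𝒯v` by parts over
`[0, 1]` therefore kills the boundary term and leaves `-∫ ℛw · (𝒯v)' = -∫ ℛw · ℛv`.
-/

open MeasureTheory

/-- The 2-PI operator `𝒯` associated with Burgers' equation with Dirichlet BCs on `[0,1]`. -/
noncomputable def TopPI (v : ℝ → ℝ) (s : ℝ) : ℝ :=
  (∫ θ in (0:ℝ)..s, (s - 1) * θ * v θ) + ∫ θ in s..(1:ℝ), s * (θ - 1) * v θ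

/-- The 2-PI operator `ℛ` associated with Burgers' equation with Dirichlet BCs on `[0,1]`. -/
noncomputable def RopPI (v : ℝ → ℝ) (s : ℝ) : ℝ :=
  (∫ θ in (0:ℝ)..s, θ * v θ) + ∫ θ in s..(1:ℝ), (θ - 1) * v θ

open Set intervalIntegral

section Primitive

variable {f : ℝ → ℝ} {a b c : ℝ}

theorem ContinuousOn.hasDerivAt_primitive_of_mem_Ioo (hf : ContinuousOn f (Icc a b))
    (hc : c ∈ Icc a b) {x : ℝ} (hx : x ∈ Ioo a b) :
    HasDerivAt (fun y => ∫ t in c..y, f t) (f x) x :=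
  integral_hasDerivAt_right
    (hf.mono (uIcc_subset_Icc hc (Ioo_subset_Icc_self hx))).intervalIntegrable
    ((hf.mono Ioo_subset_Icc_self).stronglyMeasurableAtFilter isOpen_Ioo x hx)
    (hf.continuousAt (Icc_mem_nhds hx.1 hx.2))

theorem ContinuousOn.continuousOn_primitive_of_mem (hf : ContinuousOn f (Icc a b))
    (hc : c ∈ Icc a b) : ContinuousOn (fun y => ∫ t in c..y, f t) (Icc a b) := by
  have hab : a ≤ b := hc.1.trans hc.2
  rw [← uIcc_of_le hab] at hc ⊢
  exact continuousOn_primitive_interval' (hf.intervalIntegrable_of_Icc hab) hc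

end Primitive

section PIOperators

variable {v w : ℝ → ℝ}

theorem RopPI_eq_primitives (v : ℝ → ℝ) :
    RopPI v = fun s => (∫ θ in (0:ℝ)..s, θ * v θ) - ∫ θ in (1:ℝ)..s, (θ - 1) * v θ := by
  funext s
  rw [RopPI, integral_symm 1 s]
  ring

theorem TopPI_eq_primitives (v : ℝ → ℝ) :
    TopPI v = fun s =>
      (s - 1) * (∫ θ in (0:ℝ)..s, θ * v θ) - s * ∫ θ in (1:ℝ)..s, (θ - 1) * v θ := by
  funext s
  rw [TopPI, integral_symm 1 s]
  simp only [mul_assoc, intervalIntegral.integral_const_mul]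
  ring

theorem TopPI_zero (v : ℝ → ℝ) : TopPI v 0 = 0 := by
  simp [TopPI_eq_primitives]

theorem TopPI_one (v : ℝ → ℝ) : TopPI v 1 = 0 := by
  simp [TopPI_eq_primitives]

theorem continuousOn_RopPI_weights (hv : ContinuousOn v (Icc 0 1)) :
    ContinuousOn (fun θ => θ * v θ) (Icc 0 1) ∧ ContinuousOn (fun θ => (θ - 1) * v θ) (Icc 0 1) :=
  ⟨continuousOn_id.mul hv, (continuousOn_id.sub continuousOn_const).mul hv⟩

theorem continuousOn_RopPI (hv : ContinuousOn v (Icc 0 1)) :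
    ContinuousOn (RopPI v) (Icc 0 1) := by
  obtain ⟨h₀, h₁⟩ := continuousOn_RopPI_weights hv
  rw [RopPI_eq_primitives]
  exact (h₀.continuousOn_primitive_of_mem (left_mem_Icc.2 zero_le_one)).sub
    (h₁.continuousOn_primitive_of_mem (right_mem_Icc.2 zero_le_one))

theorem continuousOn_TopPI (hv : ContinuousOn v (Icc 0 1)) :
    ContinuousOn (TopPI v) (Icc 0 1) := by
  obtain ⟨h₀, h₁⟩ := continuousOn_RopPI_weights hv
  rw [TopPI_eq_primitives]
  exact ((continuousOn_id.sub continuousOn_const).mul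
    (h₀.continuousOn_primitive_of_mem (left_mem_Icc.2 zero_le_one))).sub
    (continuousOn_id.mul (h₁.continuousOn_primitive_of_mem (right_mem_Icc.2 zero_le_one)))

theorem hasDerivAt_RopPI (hv : ContinuousOn v (Icc 0 1)) {s : ℝ} (hs : s ∈ Ioo 0 1) :
    HasDerivAt (RopPI v) (v s) s := by
  obtain ⟨h₀, h₁⟩ := continuousOn_RopPI_weights hv
  rw [RopPI_eq_primitives]
  exact ((h₀.hasDerivAt_primitive_of_mem_Ioo (left_mem_Icc.2 zero_le_one) hs).sub
    (h₁.hasDerivAt_primitive_of_mem_Ioo (right_mem_Icc.2 zero_le_one) hs)).congr_deriv (by ring)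

theorem hasDerivAt_TopPI (hv : ContinuousOn v (Icc 0 1)) {s : ℝ} (hs : s ∈ Ioo 0 1) :
    HasDerivAt (TopPI v) (RopPI v s) s := by
  obtain ⟨h₀, h₁⟩ := continuousOn_RopPI_weights hv
  rw [TopPI_eq_primitives, RopPI_eq_primitives]
  exact ((((hasDerivAt_id s).sub_const 1).mul
      (h₀.hasDerivAt_primitive_of_mem_Ioo (left_mem_Icc.2 zero_le_one) hs)).sub
    ((hasDerivAt_id s).mul
      (h₁.hasDerivAt_primitive_of_mem_Ioo (right_mem_Icc.2 zero_le_one) hs))).congr_deriv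
    (by simp only [id_eq]; ring)

theorem integral_mul_TopPI (hv : ContinuousOn v (Icc 0 1)) (hw : ContinuousOn w (Icc 0 1)) :
    ∫ s in (0:ℝ)..1, w s * TopPI v s = -∫ s in (0:ℝ)..1, RopPI w s * RopPI v s := by
  have hI : uIcc (0:ℝ) 1 = Icc 0 1 := uIcc_of_le zero_le_one
  have hibp := integral_mul_deriv_eq_deriv_mul_of_hasDerivAt (a := 0) (b := 1)
    (hI ▸ continuousOn_RopPI hw) (hI ▸ continuousOn_TopPI hv)
    (fun s hs => hasDerivAt_RopPI hw (by simpa using hs))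
    (fun s hs => hasDerivAt_TopPI hv (by simpa using hs))
    (hw.intervalIntegrable_of_Icc zero_le_one)
    ((continuousOn_RopPI hv).intervalIntegrable_of_Icc zero_le_one)
  rw [hibp, TopPI_zero, TopPI_one]
  ring

end PIOperators

theorem Top_eq_neg_Rop_adjoint_Rop (v w : ℝ → ℝ)
    (hv : ContinuousOn v (Set.Icc 0 1)) (hw : ContinuousOn w (Set.Icc 0 1)) :
    ((∫ s in (0:ℝ)..1, w s * TopPI v s) = -∫ s in (0:ℝ)..1, RopPI w s * RopPI v s)
    ∧ ((∫ s in (0:ℝ)..1, v s * TopPI v s) = -∫ s in (0:ℝ)..1, (RopPI v s) ^ 2)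
    ∧ (∫ s in (0:ℝ)..1, v s * TopPI v s) ≤ 0 := by
  have hvv : ∫ s in (0:ℝ)..1, v s * TopPI v s = -∫ s in (0:ℝ)..1, (RopPI v s) ^ 2 := by
    simpa only [sq] using integral_mul_TopPI hv hv
  refine ⟨integral_mul_TopPI hv hw, hvv, ?_⟩
  rw [hvv, neg_nonpos]
  exact integral_nonneg zero_le_one fun s _ => sq_nonneg _
end

section
/- Let u : ℝ → ℝ be four times continuously differentiable on [0,1] with u(0) = 0, u(1) = 0, u'(0) = 0, and u'(1) = 0. Then for every s ∈ [0,1], all three of the following hold: (i) −∫_0^s (1/6)(s−1)²θ²(2sθ−3s+θ)·u''''(θ) dθ − ∫_s^1 (1/6)(θ−1)²s²(2sθ−3θ+s)·u''''(θ) dθ = u(s); (ii) −∫_0^s (1/2)(s−1)θ²(2sθ−3s+1)·u''''(θ) dθ − ∫_s^1 (1/2)s(θ−1)²(2sθ+s−2θ)·u''''(θ) dθ = u'(s); (iii) −∫_0^s θ²(2sθ−3s−θ+2)·u''''(θ) dθ − ∫_s^1 (θ−1)²(2sθ+s−θ)·u''''(θ) dθ = u''(s). -/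
/-!
Each identity is Green's representation formula for `d⁴/dθ⁴` with clamped ends. On either side
of `s` the kernel is a cubic polynomial in `θ`, so four integrations by parts turn `∫ G u''''`
into the bilinear concomitant `G u''' - G' u'' + G'' u' - G''' u` evaluated at the endpoints.
At `0` and `1` it vanishes, since there both the kernel and `u` have a double zero; at `θ = s`
only the jumps of `G, G', G'', G'''` survive, and for the three kernels these jumps are chosen so
as to pick out `u s`, `u' s` and `u'' s`.
-/

open MeasureTheory intervalIntegral Polynomial Set
open scoped Interval

section IntegrationByParts

variable {S : Set ℝ} {a b : ℝ}

theorem integral_eval_mul_deriv (p : ℝ[X]) {f f' : ℝ → ℝ} (hab : [[a, b]] ⊆ S)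
    (hf : ∀ x ∈ S, HasDerivWithinAt f (f' x) S x) (hf' : ContinuousOn f' S) :
    ∫ θ in a..b, p.eval θ * f' θ
      = p.eval b * f b - p.eval a * f a - ∫ θ in a..b, (derivative p).eval θ * f θ :=
  integral_mul_deriv_eq_deriv_mul_of_hasDerivWithinAt
    (fun x _ => (p.hasDerivAt x).hasDerivWithinAt) (fun x hx => (hf x (hab hx)).mono hab)
    (p.derivative.continuous.intervalIntegrable a b) ((hf'.mono hab).intervalIntegrable)

noncomputable def bilinearConcomitant (p : ℝ[X]) (u u₁ u₂ u₃ : ℝ → ℝ) (x : ℝ) : ℝ :=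
  p.eval x * u₃ x - (derivative p).eval x * u₂ x + (derivative^[2] p).eval x * u₁ x
    - (derivative^[3] p).eval x * u x

theorem integral_eval_mul_fourth_deriv (p : ℝ[X]) {u u₁ u₂ u₃ u₄ : ℝ → ℝ} (hab : [[a, b]] ⊆ S)
    (h₁ : ∀ x ∈ S, HasDerivWithinAt u (u₁ x) S x) (h₂ : ∀ x ∈ S, HasDerivWithinAt u₁ (u₂ x) S x)
    (h₃ : ∀ x ∈ S, HasDerivWithinAt u₂ (u₃ x) S x) (h₄ : ∀ x ∈ S, HasDerivWithinAt u₃ (u₄ x) S x)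
    (hu₄ : ContinuousOn u₄ S) :
    ∫ θ in a..b, p.eval θ * u₄ θ
      = bilinearConcomitant p u u₁ u₂ u₃ b - bilinearConcomitant p u u₁ u₂ u₃ a
        + ∫ θ in a..b, (derivative^[4] p).eval θ * u θ := by
  rw [integral_eval_mul_deriv p hab h₄ hu₄,
    integral_eval_mul_deriv _ hab h₃ fun x hx => (h₄ x hx).continuousWithinAt,
    integral_eval_mul_deriv _ hab h₂ fun x hx => (h₃ x hx).continuousWithinAt,
    integral_eval_mul_deriv _ hab h₁ fun x hx => (h₂ x hx).continuousWithinAt]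
  simp only [bilinearConcomitant, Function.iterate_succ_apply', Function.iterate_zero_apply]
  ring

end IntegrationByParts

theorem bilinearConcomitant_sub (p q : ℝ[X]) (u u₁ u₂ u₃ : ℝ → ℝ) (x : ℝ) :
    bilinearConcomitant (p - q) u u₁ u₂ u₃ x
      = bilinearConcomitant p u u₁ u₂ u₃ x - bilinearConcomitant q u u₁ u₂ u₃ x := by
  simp only [bilinearConcomitant, iterate_derivative_sub, derivative_sub, eval_sub]
  ring

theorem bilinearConcomitant_eq_zero {p : ℝ[X]} {u u₁ u₂ u₃ : ℝ → ℝ} {x : ℝ}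
    (hp : p.eval x = 0) (hp' : (derivative p).eval x = 0) (hu : u x = 0) (hu₁ : u₁ x = 0) :
    bilinearConcomitant p u u₁ u₂ u₃ x = 0 := by
  simp [bilinearConcomitant, hp, hp', hu, hu₁]

theorem clamped_green_identity {u u₁ u₂ u₃ u₄ : ℝ → ℝ}
    (h₁ : ∀ x ∈ Icc (0:ℝ) 1, HasDerivWithinAt u (u₁ x) (Icc 0 1) x)
    (h₂ : ∀ x ∈ Icc (0:ℝ) 1, HasDerivWithinAt u₁ (u₂ x) (Icc 0 1) x)
    (h₃ : ∀ x ∈ Icc (0:ℝ) 1, HasDerivWithinAt u₂ (u₃ x) (Icc 0 1) x)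
    (h₄ : ∀ x ∈ Icc (0:ℝ) 1, HasDerivWithinAt u₃ (u₄ x) (Icc 0 1) x)
    (hu₄ : ContinuousOn u₄ (Icc 0 1))
    (h0 : u 0 = 0) (h1 : u 1 = 0) (h0' : u₁ 0 = 0) (h1' : u₁ 1 = 0)
    {s : ℝ} (hs : s ∈ Icc (0:ℝ) 1) (p q : ℝ[X]) (hp : p.natDegree ≤ 3) (hq : q.natDegree ≤ 3)
    (hp0 : p.eval 0 = 0) (hp0' : (derivative p).eval 0 = 0)
    (hq1 : q.eval 1 = 0) (hq1' : (derivative q).eval 1 = 0) :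
    -(∫ θ in (0:ℝ)..s, p.eval θ * u₄ θ) - ∫ θ in s..(1:ℝ), q.eval θ * u₄ θ
      = bilinearConcomitant (q - p) u u₁ u₂ u₃ s := by
  have h0I : (0:ℝ) ∈ Icc (0:ℝ) 1 := left_mem_Icc.2 zero_le_one
  have h1I : (1:ℝ) ∈ Icc (0:ℝ) 1 := right_mem_Icc.2 zero_le_one
  rw [integral_eval_mul_fourth_deriv p (uIcc_subset_Icc h0I hs) h₁ h₂ h₃ h₄ hu₄,
    integral_eval_mul_fourth_deriv q (uIcc_subset_Icc hs h1I) h₁ h₂ h₃ h₄ hu₄,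
    iterate_derivative_eq_zero (by omega), iterate_derivative_eq_zero (by omega),
    bilinearConcomitant_eq_zero hp0 hp0' h0 h0', bilinearConcomitant_eq_zero hq1 hq1' h1 h1',
    bilinearConcomitant_sub]
  simp only [eval_zero, zero_mul, intervalIntegral.integral_zero]
  ring

theorem KSE_reconstruction (u u' u'' u''' u'''' : ℝ → ℝ)
    (hu' : ∀ x ∈ Set.Icc (0:ℝ) 1, HasDerivWithinAt u (u' x) (Set.Icc 0 1) x)
    (hu'' : ∀ x ∈ Set.Icc (0:ℝ) 1, HasDerivWithinAt u' (u'' x) (Set.Icc 0 1) x)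
    (hu''' : ∀ x ∈ Set.Icc (0:ℝ) 1, HasDerivWithinAt u'' (u''' x) (Set.Icc 0 1) x)
    (hu'''' : ∀ x ∈ Set.Icc (0:ℝ) 1, HasDerivWithinAt u''' (u'''' x) (Set.Icc 0 1) x)
    (hcont : ContinuousOn u'''' (Set.Icc 0 1))
    (h0 : u 0 = 0) (h1 : u 1 = 0) (h0' : u' 0 = 0) (h1' : u' 1 = 0) :
    ∀ s ∈ Set.Icc (0:ℝ) 1,
      (-(∫ θ in (0:ℝ)..s, (1/6) * (s - 1) ^ 2 * θ ^ 2 * (2*s*θ - 3*s + θ) * u'''' θ)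
          - (∫ θ in s..(1:ℝ), (1/6) * (θ - 1) ^ 2 * s ^ 2 * (2*s*θ - 3*θ + s) * u'''' θ)
        = u s)
      ∧ (-(∫ θ in (0:ℝ)..s, (1/2) * (s - 1) * θ ^ 2 * (2*s*θ - 3*s + 1) * u'''' θ)
          - (∫ θ in s..(1:ℝ), (1/2) * s * (θ - 1) ^ 2 * (2*s*θ + s - 2*θ) * u'''' θ)
        = u' s)
      ∧ (-(∫ θ in (0:ℝ)..s, θ ^ 2 * (2*s*θ - 3*s - θ + 2) * u'''' θ)
          - (∫ θ in s..(1:ℝ), (θ - 1) ^ 2 * (2*s*θ + s - θ) * u'''' θ)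
        = u'' s) := by
  intro s hs
  have green := clamped_green_identity hu' hu'' hu''' hu'''' hcont h0 h1 h0' h1' hs
  refine ⟨?_, ?_, ?_⟩
  · convert green (C (1/6) * (C s - 1) ^ 2 * X ^ 2 * (C (2*s) * X - C (3*s) + X))
      (C (1/6) * (X - 1) ^ 2 * C s ^ 2 * (C (2*s) * X - 3 * X + C s)) ?_ ?_ ?_ ?_ ?_ ?_ using 1
    all_goals first
      | compute_degree!
      | simp [bilinearConcomitant, derivative_pow, derivative_mul] <;> ring
  · convert green (C (1/2) * (C s - 1) * X ^ 2 * (C (2*s) * X - C (3*s) + 1))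
      (C (1/2) * C s * (X - 1) ^ 2 * (C (2*s) * X + C s - 2 * X)) ?_ ?_ ?_ ?_ ?_ ?_ using 1
    all_goals first
      | compute_degree!
      | simp [bilinearConcomitant, derivative_pow, derivative_mul] <;> ring
  · convert green (X ^ 2 * (C (2*s) * X - C (3*s) - X + 2))
      ((X - 1) ^ 2 * (C (2*s) * X + C s - X)) ?_ ?_ ?_ ?_ ?_ ?_ using 1
    all_goals first
      | compute_degree!
      | simp [bilinearConcomitant, derivative_pow, derivative_mul] <;> ring
end

section
/- Let r ≥ 0 satisfy r²·e^{r/2} ≤ 12π², and let u : ℝ → ℝ be continuously differentiable on [0,1] with u(0) = 0 and u(1) = 0. Then ∫_0^1 e^{(r/2)s}·((r³/8)·u(s)² − (3r/2)·u'(s)²) ds ≤ 0. -/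
open MeasureTheory Set Filter Real intervalIntegral
open scoped Topology

section Wirtinger

variable {a b : ℝ} {u u' : ℝ → ℝ}

/- Completing the square, `u'² + (ψ u²)' = (u' + ψ u)² + (ψ' - ψ²) u²`, and `∫ₐᵇ (ψ u²)' = 0`
because `u` vanishes at both ends. -/
theorem mul_integral_sq_le_integral_deriv_sq_of_riccati {k : ℝ} {ψ ψ' : ℝ → ℝ} (hab : a ≤ b)
    (hu : ∀ x ∈ Icc a b, HasDerivWithinAt u (u' x) (Icc a b) x) (hu' : ContinuousOn u' (Icc a b))
    (hψ : ∀ x ∈ Icc a b, HasDerivWithinAt ψ (ψ' x) (Icc a b) x)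
    (hψ' : ContinuousOn ψ' (Icc a b)) (hk : ∀ x ∈ Icc a b, k ≤ ψ' x - ψ x ^ 2)
    (ha : u a = 0) (hb : u b = 0) :
    k * ∫ x in a..b, u x ^ 2 ≤ ∫ x in a..b, u' x ^ 2 := by
  have hu_cont : ContinuousOn u (Icc a b) := fun x hx => (hu x hx).continuousWithinAt
  have hψ_cont : ContinuousOn ψ (Icc a b) := fun x hx => (hψ x hx).continuousWithinAt
  set g' : ℝ → ℝ := fun x => ψ' x * u x ^ 2 + ψ x * (2 * u x * u' x)
  have hg'_cont : ContinuousOn g' (Icc a b) := by fun_prop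
  have hg'_int : ∫ x in a..b, g' x = 0 := by
    rw [integral_eq_sub_of_hasDerivAt_of_le hab (hψ_cont.mul (hu_cont.pow 2)) _
      (hg'_cont.intervalIntegrable_of_Icc hab)]
    · simp [ha, hb]
    · intro x hx
      have hIcc : Icc a b ∈ 𝓝 x := Icc_mem_nhds hx.1 hx.2
      have hux := (hu x (Ioo_subset_Icc_self hx)).hasDerivAt hIcc
      have hψx := (hψ x (Ioo_subset_Icc_self hx)).hasDerivAt hIcc
      exact (hψx.mul (hux.pow 2)).congr_deriv (by simp only [g', Pi.pow_apply]; ring)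
  have hu2_int : IntervalIntegrable (fun x => u x ^ 2) volume a b :=
    (hu_cont.pow 2).intervalIntegrable_of_Icc hab
  have hu'2_int : IntervalIntegrable (fun x => u' x ^ 2) volume a b :=
    (hu'.pow 2).intervalIntegrable_of_Icc hab
  calc k * ∫ x in a..b, u x ^ 2 = ∫ x in a..b, k * u x ^ 2 :=
      (intervalIntegral.integral_const_mul _ _).symm
    _ ≤ ∫ x in a..b, (u' x ^ 2 + g' x) := by
        refine integral_mono_on hab (hu2_int.const_mul k)
          (hu'2_int.add (hg'_cont.intervalIntegrable_of_Icc hab)) fun x hx => ?_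
        nlinarith [mul_le_mul_of_nonneg_right (hk x hx) (sq_nonneg (u x)),
          sq_nonneg (u' x + ψ x * u x)]
    _ = ∫ x in a..b, u' x ^ 2 := by
        rw [integral_add hu'2_int (hg'_cont.intervalIntegrable_of_Icc hab), hg'_int, add_zero]

/- `ψ x = c tan (c (x - (a + b) / 2))` solves `ψ' - ψ² = c²` and stays bounded on `[a, b]`
as long as `c (b - a) < π`. -/
theorem sq_mul_integral_sq_le_integral_deriv_sq {c : ℝ} (hab : a ≤ b) (hc : 0 ≤ c)
    (hcπ : c * (b - a) < π)
    (hu : ∀ x ∈ Icc a b, HasDerivWithinAt u (u' x) (Icc a b) x) (hu' : ContinuousOn u' (Icc a b))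
    (ha : u a = 0) (hb : u b = 0) :
    c ^ 2 * ∫ x in a..b, u x ^ 2 ≤ ∫ x in a..b, u' x ^ 2 := by
  set θ : ℝ → ℝ := fun x => c * (x - (a + b) / 2)
  have hcos : ∀ x ∈ Icc a b, 0 < cos (θ x) := fun x hx => by
    refine cos_pos_of_mem_Ioo ⟨?_, ?_⟩ <;> simp only [θ] <;>
      nlinarith [mul_nonneg hc (sub_nonneg.2 hx.1), mul_nonneg hc (sub_nonneg.2 hx.2)]
  have hψ : ∀ x ∈ Icc a b,
      HasDerivAt (fun y => c * tan (θ y)) (c * (1 / cos (θ x) ^ 2 * c)) x := fun x hx =>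
    (((hasDerivAt_tan (hcos x hx).ne').comp x
      (((hasDerivAt_id x).sub_const ((a + b) / 2)).const_mul c)).const_mul c).congr_deriv
      (by simp)
  refine mul_integral_sq_le_integral_deriv_sq_of_riccati hab hu hu'
    (fun x hx => (hψ x hx).hasDerivWithinAt) ?_ (fun x hx => ?_) ha hb
  · exact continuousOn_const.mul ((continuousOn_const.div (by fun_prop)
      fun x hx => (pow_pos (hcos x hx) 2).ne').mul continuousOn_const)
  · have hcos_ne := (hcos x hx).ne'
    refine le_of_eq ?_
    rw [tan_eq_sin_div_cos]
    field_simp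
    linear_combination c ^ 2 * sin_sq_add_cos_sq (θ x)

theorem pi_div_sq_mul_integral_sq_le_integral_deriv_sq (hab : a < b)
    (hu : ∀ x ∈ Icc a b, HasDerivWithinAt u (u' x) (Icc a b) x) (hu' : ContinuousOn u' (Icc a b))
    (ha : u a = 0) (hb : u b = 0) :
    (π / (b - a)) ^ 2 * ∫ x in a..b, u x ^ 2 ≤ ∫ x in a..b, u' x ^ 2 := by
  have hba : 0 < b - a := sub_pos.2 hab
  have hlim : Tendsto (fun c : ℝ => c ^ 2 * ∫ x in a..b, u x ^ 2) (𝓝[<] (π / (b - a)))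
      (𝓝 ((π / (b - a)) ^ 2 * ∫ x in a..b, u x ^ 2)) :=
    ((continuous_pow 2).mul continuous_const).continuousAt.tendsto.mono_left nhdsWithin_le_nhds
  refine le_of_tendsto hlim ?_
  filter_upwards [Ioo_mem_nhdsLT (div_pos pi_pos hba)] with c hc
  refine sq_mul_integral_sq_le_integral_deriv_sq hab.le hc.1.le ?_ hu hu' ha hb
  exact (lt_div_iff₀ hba).1 hc.2

end Wirtinger

theorem KdV_conservative_stability_bound (r : ℝ) (hr : 0 ≤ r)
    (hrbound : r ^ 2 * Real.exp (r / 2) ≤ 12 * Real.pi ^ 2)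
    (u u' : ℝ → ℝ)
    (hu' : ∀ x ∈ Set.Icc (0:ℝ) 1, HasDerivWithinAt u (u' x) (Set.Icc 0 1) x)
    (hcont : ContinuousOn u' (Set.Icc 0 1))
    (h0 : u 0 = 0) (h1 : u 1 = 0) :
    (∫ s in (0:ℝ)..1,
      Real.exp ((r/2) * s) * ((r ^ 3 / 8) * u s ^ 2 - (3 * r / 2) * u' s ^ 2)) ≤ 0 := by
  have hwirtinger := pi_div_sq_mul_integral_sq_le_integral_deriv_sq zero_lt_one hu' hcont h0 h1
  rw [sub_zero, div_one] at hwirtinger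
  have hu_cont : ContinuousOn u (Icc 0 1) := fun x hx => (hu' x hx).continuousWithinAt
  have hu2 : IntervalIntegrable (fun s => u s ^ 2) volume 0 1 :=
    (hu_cont.pow 2).intervalIntegrable_of_Icc zero_le_one
  have hu'2 : IntervalIntegrable (fun s => u' s ^ 2) volume 0 1 :=
    (hcont.pow 2).intervalIntegrable_of_Icc zero_le_one
  have hweight : ∀ s ∈ Icc (0:ℝ) 1,
      exp (r / 2 * s) * (r ^ 3 / 8 * u s ^ 2 - 3 * r / 2 * u' s ^ 2) ≤
        exp (r / 2) * (r ^ 3 / 8) * u s ^ 2 - 3 * r / 2 * u' s ^ 2 := fun s hs => by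
    have hle : exp (r / 2 * s) ≤ exp (r / 2) := exp_le_exp.2 (by nlinarith [hs.2])
    have hge : 1 ≤ exp (r / 2 * s) := one_le_exp (by nlinarith [hs.1])
    nlinarith [mul_le_mul_of_nonneg_right hle (by positivity : 0 ≤ r ^ 3 / 8 * u s ^ 2),
      mul_le_mul_of_nonneg_right hge (by positivity : 0 ≤ 3 * r / 2 * u' s ^ 2)]
  calc _ ≤ ∫ s in (0:ℝ)..1, exp (r / 2) * (r ^ 3 / 8) * u s ^ 2 - 3 * r / 2 * u' s ^ 2 :=
        integral_mono_on zero_le_one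
          (ContinuousOn.intervalIntegrable_of_Icc (μ := volume) zero_le_one (by fun_prop))
          ((hu2.const_mul _).sub (hu'2.const_mul _)) hweight
    _ = exp (r / 2) * (r ^ 3 / 8) * (∫ s in (0:ℝ)..1, u s ^ 2) -
          3 * r / 2 * ∫ s in (0:ℝ)..1, u' s ^ 2 := by
        rw [integral_sub (hu2.const_mul _) (hu'2.const_mul _), intervalIntegral.integral_const_mul,
          intervalIntegral.integral_const_mul]
    _ ≤ 0 := by
        have hA : 0 ≤ ∫ s in (0:ℝ)..1, u s ^ 2 := integral_nonneg zero_le_one fun s _ => sq_nonneg _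
        nlinarith [mul_le_mul_of_nonneg_right hrbound (mul_nonneg hr hA),
          mul_le_mul_of_nonneg_left hwirtinger hr]
end

section
/- Let r ≥ 0 satisfy e^{3r}·(18r² + 1) ≤ π², and let u : ℝ → ℝ be twice continuously differentiable on [0,1] with u(0) = 0, u(1) = 0, u'(0) = 0, and u'(1) = 0. Then ∫_0^1 e^{3rs}·(−9r²·(9r² + 1)·u(s)² + (36r² + 2)·u'(s)² − 2·u''(s)²) ds ≤ 0. -/
/-! On `[0, 1]` the weight `e^{3rs}` lies between `1` and `e^{3r}`, so the integrand is at most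
`e^{3r} (36r² + 2) u'² - 2 u''²`. Since `u'` vanishes at both ends, Wirtinger's inequality
`π² ∫ u'² ≤ ∫ u''²` makes the integral of this bound nonpositive as soon as
`e^{3r} (18r² + 1) ≤ π²`.

Wirtinger's inequality on `[a, b]` comes from Picone's identity for the weight `sin (k x + c)`,
which stays positive on `[a, b]` for every `k < π / (b - a)` and a suitable phase `c`, followed by
the limit `k → π / (b - a)`. -/

open MeasureTheory Set Filter Topology Real

/-- Picone's identity: `g = k f² cos/sin (k x + c)` has derivative
`f'² - k² f² - (f' - k f cos/sin (k x + c))²` and vanishes at both ends. -/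
theorem sq_mul_integral_sq_le_integral_sq_deriv_of_sin_pos {f f' : ℝ → ℝ} {a b k c : ℝ}
    (hab : a ≤ b) (hsin : ∀ x ∈ Icc a b, 0 < sin (k * x + c))
    (hf : ∀ x ∈ Icc a b, HasDerivWithinAt f (f' x) (Icc a b) x)
    (hf' : ContinuousOn f' (Icc a b)) (ha : f a = 0) (hb : f b = 0) :
    k ^ 2 * ∫ x in a..b, f x ^ 2 ≤ ∫ x in a..b, f' x ^ 2 := by
  have hfc : ContinuousOn f (Icc a b) := fun x hx => (hf x hx).continuousWithinAt
  set g : ℝ → ℝ := fun x => k * f x ^ 2 * (cos (k * x + c) / sin (k * x + c))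
  have hg : ContinuousOn g (Icc a b) := by
    have hlin : Continuous fun x => k * x + c := by fun_prop
    exact (continuousOn_const.mul (hfc.pow 2)).mul ((continuous_cos.comp hlin).continuousOn.div
      (continuous_sin.comp hlin).continuousOn fun x hx => (hsin x hx).ne')
  have hg' : ∀ x ∈ Ioo a b, HasDerivAt g
      (f' x ^ 2 - k ^ 2 * f x ^ 2 - (f' x - k * f x * (cos (k * x + c) / sin (k * x + c))) ^ 2)
      x := by
    intro x hx
    have hfx : HasDerivAt f (f' x) x :=
      (hf x (Ioo_subset_Icc_self hx)).hasDerivAt (Icc_mem_nhds hx.1 hx.2)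
    have hlin : HasDerivAt (fun x => k * x + c) k x := by
      simpa using ((hasDerivAt_id x).const_mul k).add_const c
    have hsx : sin (k * x + c) ≠ 0 := (hsin x (Ioo_subset_Icc_self hx)).ne'
    refine (((hfx.fun_pow 2).const_mul k).fun_mul
      (hlin.cos.fun_div hlin.sin hsx)).congr_deriv ?_
    field_simp
    ring
  have hFTC := intervalIntegral.sub_le_integral_of_hasDeriv_right_of_le
    (φ := fun x => f' x ^ 2 - k ^ 2 * f x ^ 2) hab hg
    (fun x hx => (hg' x hx).hasDerivWithinAt)
    ((hf'.pow 2).sub (continuousOn_const.mul (hfc.pow 2))).integrableOn_Icc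
    (fun x _ => sub_le_self _ (sq_nonneg _))
  rw [intervalIntegral.integral_sub, intervalIntegral.integral_const_mul] at hFTC
  · simp only [g, ha, hb, ne_eq, OfNat.ofNat_ne_zero, not_false_eq_true, zero_pow, mul_zero,
      zero_mul, sub_self] at hFTC
    linarith
  · exact (hf'.pow 2).intervalIntegrable_of_Icc hab
  · exact (continuousOn_const.mul (hfc.pow 2)).intervalIntegrable_of_Icc hab

theorem pi_div_sq_mul_integral_sq_le_integral_sq_deriv {f f' : ℝ → ℝ} {a b : ℝ} (hab : a < b)
    (hf : ∀ x ∈ Icc a b, HasDerivWithinAt f (f' x) (Icc a b) x)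
    (hf' : ContinuousOn f' (Icc a b)) (ha : f a = 0) (hb : f b = 0) :
    (π / (b - a)) ^ 2 * ∫ x in a..b, f x ^ 2 ≤ ∫ x in a..b, f' x ^ 2 := by
  have hweighted : ∀ k ∈ Ioo 0 (π / (b - a)),
      k ^ 2 * ∫ x in a..b, f x ^ 2 ≤ ∫ x in a..b, f' x ^ 2 := by
    rintro k ⟨hk0, hkπ⟩
    have hkl : k * (b - a) < π := (lt_div_iff₀ (sub_pos.2 hab)).1 hkπ
    -- `k x + c = π / 2 + k (x - (a + b) / 2)` stays in `(0, π)` on `[a, b]`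
    refine sq_mul_integral_sq_le_integral_sq_deriv_of_sin_pos (c := (π - k * (a + b)) / 2)
      hab.le (fun x hx => sin_pos_of_pos_of_lt_pi ?_ ?_) hf hf' ha hb
    · nlinarith [hx.1]
    · nlinarith [hx.2]
  have hlim : Tendsto (fun k => k ^ 2 * ∫ x in a..b, f x ^ 2) (𝓝[<] (π / (b - a)))
      (𝓝 ((π / (b - a)) ^ 2 * ∫ x in a..b, f x ^ 2)) :=
    ((continuous_pow 2).mul continuous_const).continuousAt.tendsto.mono_left nhdsWithin_le_nhds
  have hpos : 0 < π / (b - a) := div_pos pi_pos (sub_pos.2 hab)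
  exact le_of_tendsto hlim (eventually_of_mem (Ioo_mem_nhdsLT hpos) hweighted)

theorem exp_mul_stability_integrand_le {r s : ℝ} (hr : 0 ≤ r) (hs : s ∈ Icc (0 : ℝ) 1)
    (x y z : ℝ) :
    exp (3 * r * s) * (-(9 * r ^ 2) * (9 * r ^ 2 + 1) * x ^ 2 + (36 * r ^ 2 + 2) * y ^ 2
      - 2 * z ^ 2) ≤ exp (3 * r) * (36 * r ^ 2 + 2) * y ^ 2 - 2 * z ^ 2 := by
  have hlow : 1 ≤ exp (3 * r * s) := one_le_exp (by nlinarith [hs.1])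
  have hup : exp (3 * r * s) ≤ exp (3 * r) := exp_le_exp.2 (by nlinarith [hs.2])
  nlinarith [mul_le_mul_of_nonneg_right hup (sq_nonneg y),
    mul_le_mul_of_nonneg_right hlow (sq_nonneg z), sq_nonneg (r * x), sq_nonneg (r ^ 2 * x),
    exp_pos (3 * r * s)]

theorem KSE_conservative_stability_bound_general (r : ℝ) (hr : 0 ≤ r)
    (hrbound : Real.exp (3 * r) * (18 * r ^ 2 + 1) ≤ Real.pi ^ 2)
    (u u' u'' : ℝ → ℝ)
    (hu' : ∀ x ∈ Set.Icc (0:ℝ) 1, HasDerivWithinAt u (u' x) (Set.Icc 0 1) x)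
    (hu'' : ∀ x ∈ Set.Icc (0:ℝ) 1, HasDerivWithinAt u' (u'' x) (Set.Icc 0 1) x)
    (hcont : ContinuousOn u'' (Set.Icc 0 1))
    (h0' : u' 0 = 0) (h1' : u' 1 = 0) :
    (∫ s in (0:ℝ)..1,
      Real.exp (3 * r * s)
        * (-(9 * r ^ 2) * (9 * r ^ 2 + 1) * u s ^ 2
            + (36 * r ^ 2 + 2) * u' s ^ 2 - 2 * u'' s ^ 2)) ≤ 0 := by
  have huc : ContinuousOn u (Icc 0 1) := fun x hx => (hu' x hx).continuousWithinAt
  have hu'c : ContinuousOn u' (Icc 0 1) := fun x hx => (hu'' x hx).continuousWithinAt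
  have hwirtinger : π ^ 2 * ∫ s in (0:ℝ)..1, u' s ^ 2 ≤ ∫ s in (0:ℝ)..1, u'' s ^ 2 := by
    simpa using pi_div_sq_mul_integral_sq_le_integral_sq_deriv one_pos hu'' hcont h0' h1'
  have hu'sq : 0 ≤ ∫ s in (0:ℝ)..1, u' s ^ 2 :=
    intervalIntegral.integral_nonneg zero_le_one fun s _ => sq_nonneg _
  calc _ ≤ ∫ s in (0:ℝ)..1, (exp (3 * r) * (36 * r ^ 2 + 2) * u' s ^ 2 - 2 * u'' s ^ 2) :=
        intervalIntegral.integral_mono_on zero_le_one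
          (ContinuousOn.intervalIntegrable_of_Icc zero_le_one (by fun_prop))
          (ContinuousOn.intervalIntegrable_of_Icc zero_le_one (by fun_prop))
          fun s hs => exp_mul_stability_integrand_le hr hs _ _ _
    _ = exp (3 * r) * (36 * r ^ 2 + 2) * (∫ s in (0:ℝ)..1, u' s ^ 2)
          - 2 * ∫ s in (0:ℝ)..1, u'' s ^ 2 := by
        rw [intervalIntegral.integral_sub
          (ContinuousOn.intervalIntegrable_of_Icc zero_le_one (by fun_prop))
          (ContinuousOn.intervalIntegrable_of_Icc zero_le_one (by fun_prop)),
          intervalIntegral.integral_const_mul, intervalIntegral.integral_const_mul]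
    _ ≤ 0 := by nlinarith [mul_le_mul_of_nonneg_right hrbound hu'sq]

theorem KSE_conservative_stability_bound (r : ℝ) (hr : 0 ≤ r)
    (hrbound : Real.exp (3 * r) * (18 * r ^ 2 + 1) ≤ Real.pi ^ 2)
    (u u' u'' : ℝ → ℝ)
    (hu' : ∀ x ∈ Set.Icc (0:ℝ) 1, HasDerivWithinAt u (u' x) (Set.Icc 0 1) x)
    (hu'' : ∀ x ∈ Set.Icc (0:ℝ) 1, HasDerivWithinAt u' (u'' x) (Set.Icc 0 1) x)
    (hcont : ContinuousOn u'' (Set.Icc 0 1))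
    (h0 : u 0 = 0) (h1 : u 1 = 0) (h0' : u' 0 = 0) (h1' : u' 1 = 0) :
    (∫ s in (0:ℝ)..1,
      Real.exp (3 * r * s)
        * (-(9 * r ^ 2) * (9 * r ^ 2 + 1) * u s ^ 2
            + (36 * r ^ 2 + 2) * u' s ^ 2 - 2 * u'' s ^ 2)) ≤ 0 :=
  KSE_conservative_stability_bound_general r hr hrbound u u' u'' hu' hu'' hcont h0' h1'
end
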